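/- Suppose the dispersion and survival matrices satisfy D S = S. Then the partial next-generation matrix is block diagonal, W = ⊕_{i=1}^n N^i, where N^i := F^i (I − S^i)^{-1} is the local dispersion-free next-generation matrix of patch i, and the newborn submatrix W̄ is the diagonal matrix diag(R₀^1,…,R₀^n), where R₀^i := (N^i)_{11}. -/

import Mathlib

open Matrix BigOperators

/-- Spectral radius of a real square matrix: the maximum modulus of its complex
eigenvalues (elements of the spectrum of the matrix viewed over `ℂ`). -/
noncomputable def specRad {ι : Type*} [Fintype ι] [DecidableEq ι]
    (M : Matrix ι ι ℝ) : ℝ :=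
  sSup {r : ℝ | ∃ μ : ℂ, μ ∈ spectrum ℂ (M.map Complex.ofReal) ∧ r = ‖μ‖}

/-- The induced `L¹` operator norm of a real matrix: the maximum absolute column sum. -/
noncomputable def colNorm {ι : Type*} [Fintype ι] (M : Matrix ι ι ℝ) : ℝ :=
  ⨆ q, ∑ p, |M p q|

/-- Local fecundity matrix: first row `(f 0, …, f (m-1))`, other rows zero. -/
def localF (m : ℕ) (f : Fin m → ℝ) : Matrix (Fin m) (Fin m) ℝ :=
  Matrix.of fun k' k => if (k' : ℕ) = 0 then f k else 0

/-- Local survival matrix: diagonal entries `sd k`, subdiagonal entries `ss k`,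
all other entries zero. -/
def localS (m : ℕ) (sd ss : Fin m → ℝ) : Matrix (Fin m) (Fin m) ℝ :=
  Matrix.of fun k' k =>
    if k' = k then sd k else if (k' : ℕ) = (k : ℕ) + 1 then ss k else 0

/-- Global (block-diagonal) fecundity matrix `F = ⊕ᵢ Fⁱ`, indexed by
(stage, patch) pairs. -/
def fecMat (m n : ℕ) (f : Fin m → Fin n → ℝ) :
    Matrix (Fin m × Fin n) (Fin m × Fin n) ℝ :=
  Matrix.of fun p q =>
    if p.2 = q.2 then localF m (fun k => f k q.2) p.1 q.1 else 0

/-- Global (block-diagonal) survival matrix `S = ⊕ᵢ Sⁱ`. -/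
def survMat (m n : ℕ) (sd ss : Fin m → Fin n → ℝ) :
    Matrix (Fin m × Fin n) (Fin m × Fin n) ℝ :=
  Matrix.of fun p q =>
    if p.2 = q.2 then localS m (fun k => sd k q.2) (fun k => ss k q.2) p.1 q.1 else 0

/-- Global dispersion matrix: the `(i,j)` patch block is `diag (d 0 i j, …, d (m-1) i j)`. -/
def dispMat (m n : ℕ) (d : Fin m → Fin n → Fin n → ℝ) :
    Matrix (Fin m × Fin n) (Fin m × Fin n) ℝ :=
  Matrix.of fun p q => if p.1 = q.1 then d q.1 p.2 q.2 else 0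

/-- Next-generation matrix `N = D F (I - D S)⁻¹`. -/
noncomputable def nextGen (m n : ℕ) (f : Fin m → Fin n → ℝ)
    (sd ss : Fin m → Fin n → ℝ) (d : Fin m → Fin n → Fin n → ℝ) :
    Matrix (Fin m × Fin n) (Fin m × Fin n) ℝ :=
  dispMat m n d * fecMat m n f * (1 - dispMat m n d * survMat m n sd ss)⁻¹

/-- Partial next-generation matrix `W = F (I - D S)⁻¹`. -/
noncomputable def partGen (m n : ℕ) (f : Fin m → Fin n → ℝ)
    (sd ss : Fin m → Fin n → ℝ) (d : Fin m → Fin n → Fin n → ℝ) :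
    Matrix (Fin m × Fin n) (Fin m × Fin n) ℝ :=
  fecMat m n f * (1 - dispMat m n d * survMat m n sd ss)⁻¹

/-- Newborn submatrix: keep only the rows and columns with stage index `0`
(the newborn indices). -/
def newbornSub {m n : ℕ} (hm : 0 < m)
    (B : Matrix (Fin m × Fin n) (Fin m × Fin n) ℝ) : Matrix (Fin n) (Fin n) ℝ :=
  Matrix.of fun i j => B (⟨0, hm⟩, i) (⟨0, hm⟩, j)

/-- The alternative net reproductive number `R̂₀ = max_{x ∈ 𝒳} ‖N x‖`, where `𝒳`
is the set of nonnegative `L¹`-unit vectors supported on the newborn indices. -/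
noncomputable def altR0 (m n : ℕ)
    (N : Matrix (Fin m × Fin n) (Fin m × Fin n) ℝ) : ℝ :=
  sSup {r : ℝ | ∃ x : Fin m × Fin n → ℝ, (∀ p, 0 ≤ x p) ∧ (∑ p, |x p|) = 1 ∧
    (∀ p : Fin m × Fin n, (p.1 : ℕ) ≠ 0 → x p = 0) ∧ r = ∑ p, |N.mulVec x p|}

/-!
If `D S = S`, dispersal drops out of `I - D S = I - S`, and `S`, `F` are block diagonal over the
patches, so `W = F (I - S)⁻¹` is the block-diagonal matrix of the local products
`Fⁱ (I - Sⁱ)⁻¹`. Each local block `I - Sⁱ` is lower triangular with diagonal entries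
`1 - sⁱ_{k,k} > 0`, hence invertible, which is what lets the inverse be taken blockwise.
-/

theorem Matrix.inv_blockDiagonal {m o R : Type*} [Fintype m] [DecidableEq m] [Fintype o]
    [DecidableEq o] [CommRing R] {M : o → Matrix m m R} (hM : ∀ i, IsUnit (M i).det) :
    (blockDiagonal M)⁻¹ = blockDiagonal fun i => (M i)⁻¹ := by
  refine inv_eq_right_inv ?_
  rw [← blockDiagonal_mul, ← blockDiagonal_one]
  exact congrArg blockDiagonal (funext fun i => mul_nonsing_inv _ (hM i))

theorem fecMat_eq_blockDiagonal (m n : ℕ) (f : Fin m → Fin n → ℝ) :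
    fecMat m n f = blockDiagonal fun i => localF m fun k => f k i := by
  ext ⟨k, i⟩ ⟨k', j⟩
  by_cases h : i = j
  · subst h; simp [fecMat]
  · simp [fecMat, blockDiagonal_apply_ne, h]

theorem survMat_eq_blockDiagonal (m n : ℕ) (sd ss : Fin m → Fin n → ℝ) :
    survMat m n sd ss =
      blockDiagonal fun i => localS m (fun k => sd k i) fun k => ss k i := by
  ext ⟨k, i⟩ ⟨k', j⟩
  by_cases h : i = j
  · subst h; simp [survMat]
  · simp [survMat, blockDiagonal_apply_ne, h]

theorem isLowerTriangular_localS (m : ℕ) (sd ss : Fin m → ℝ) :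
    (localS m sd ss).IsLowerTriangular := by
  intro k' k (hlt : k' < k)
  have hne : (k' : ℕ) ≠ k + 1 := by omega
  simp [localS, hlt.ne, hne]

theorem det_one_sub_localS (m : ℕ) (sd ss : Fin m → ℝ) :
    (1 - localS m sd ss).det = ∏ k, (1 - sd k) := by
  rw [det_of_isLowerTriangular _ (blockTriangular_one.sub (isLowerTriangular_localS m sd ss))]
  simp [localS]

theorem isUnit_det_one_sub_localS {m : ℕ} {sd : Fin m → ℝ} (ss : Fin m → ℝ)
    (hsd : ∀ k, sd k ≠ 1) : IsUnit (1 - localS m sd ss).det := by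
  rw [det_one_sub_localS, isUnit_iff_ne_zero, Finset.prod_ne_zero_iff]
  exact fun k _ => sub_ne_zero.mpr (hsd k).symm

theorem partGen_eq_blockDiagonal {m n : ℕ} (f : Fin m → Fin n → ℝ)
    {sd ss : Fin m → Fin n → ℝ} {d : Fin m → Fin n → Fin n → ℝ}
    (hsd : ∀ k i, sd k i ≠ 1)
    (hDS : dispMat m n d * survMat m n sd ss = survMat m n sd ss) :
    partGen m n f sd ss d = blockDiagonal fun i =>
      localF m (fun k => f k i) * (1 - localS m (fun k => sd k i) fun k => ss k i)⁻¹ := by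
  have hunit : ∀ i, IsUnit (1 - localS m (fun k => sd k i) fun k => ss k i).det :=
    fun i => isUnit_det_one_sub_localS _ fun k => hsd k i
  rw [partGen, hDS, fecMat_eq_blockDiagonal, survMat_eq_blockDiagonal, ← blockDiagonal_one,
    ← blockDiagonal_sub, inv_blockDiagonal (M := 1 - _) hunit, blockDiagonal_mul]
  rfl

theorem newbornSub_blockDiagonal {m n : ℕ} (hm : 0 < m)
    (M : Fin n → Matrix (Fin m) (Fin m) ℝ) :
    newbornSub hm (blockDiagonal M) = diagonal fun i => M i ⟨0, hm⟩ ⟨0, hm⟩ := by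
  ext i j
  by_cases h : i = j
  · subst h; simp [newbornSub]
  · simp [newbornSub, blockDiagonal_apply_ne, h]

theorem stmt10
    (m n : ℕ) (hm : 2 ≤ m)
    (f : Fin m → Fin n → ℝ)
    (sd ss : Fin m → Fin n → ℝ)
    (hss : ∀ k i, 0 ≤ ss k i)
    (hs1 : ∀ (k : Fin m) (i : Fin n),
      sd k i + (if (k : ℕ) + 1 < m then ss k i else 0) < 1)
    (d : Fin m → Fin n → Fin n → ℝ)
    (hDS : dispMat m n d * survMat m n sd ss = survMat m n sd ss) :
    (∀ p q : Fin m × Fin n,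
        partGen m n f sd ss d p q =
          if p.2 = q.2 then
            (localF m (fun k => f k q.2) *
              (1 - localS m (fun k => sd k q.2) (fun k => ss k q.2))⁻¹) p.1 q.1
          else 0) ∧
      newbornSub (show 0 < m by omega) (partGen m n f sd ss d) =
        Matrix.diagonal (fun i : Fin n =>
          (localF m (fun k => f k i) *
            (1 - localS m (fun k => sd k i) (fun k => ss k i))⁻¹)
            ⟨0, show 0 < m by omega⟩ ⟨0, show 0 < m by omega⟩) := by
  have hsd : ∀ k i, sd k i ≠ 1 := fun k i => by
    have := hs1 k i
    split_ifs at this <;> linarith [hss k i]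
  have hW := partGen_eq_blockDiagonal f hsd hDS
  refine ⟨fun p q => ?_, by rw [hW, newbornSub_blockDiagonal]⟩
  rw [hW, blockDiagonal_apply]
  split_ifs with h
  · rw [h]
  · rfl
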